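/- arXiv:2310.08859 — 4 statements merged into one kernel-verified Lean document; each statement's English description precedes it below -/
import Mathlib

section
/- Let p > 5, c_p := (2(p+1))^{1/(p−1)}, and α := (p−1)/2. Then, as y → +∞, ∫_{−∞}^0 Q′(x−y)² dx = (c_p²/2) e^{−2y} − (2p c_p²/(α(p+1))) e^{−(p+1)y} + o(e^{−(p+1)y}); that is, the function y ↦ ∫_{−∞}^0 Q′(x−y)² dx − (c_p²/2) e^{−2y} + (2p c_p²/(α(p+1))) e^{−(p+1)y} is o(e^{−(p+1)y}) as y → +∞. -/
open MeasureTheory Real Filter Asymptotics Set Topology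

noncomputable section

/-- The ground state `Q` of `-Q'' + Q = Q^p`. -/
def Q (p : ℝ) (x : ℝ) : ℝ :=
  (2 * (p + 1)) ^ (1 / (p - 1)) * (2 * Real.cosh ((p - 1) / 2 * x)) ^ (-(2 / (p - 1)))

/-- The constant `c_p`. -/
def cp (p : ℝ) : ℝ := (2 * (p + 1)) ^ (1 / (p - 1))

lemma hasDerivQ (p : ℝ) (hp : 5 < p) (x : ℝ) :
    HasDerivAt (Q p) (-2 * cp p * Real.sinh ((p - 1) / 2 * x) *
      (2 * Real.cosh ((p - 1) / 2 * x)) ^ (-(2 / (p - 1)) - 1)) x := by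
  have hp1 : (0:ℝ) < p - 1 := by linarith
  have hcosh : ∀ z : ℝ, (0:ℝ) < 2 * Real.cosh z := fun z => by positivity
  have h1 : HasDerivAt (fun x : ℝ => 2 * Real.cosh ((p - 1) / 2 * x))
      ((p - 1) * Real.sinh ((p - 1) / 2 * x)) x := by
    have := ((Real.hasDerivAt_cosh ((p - 1) / 2 * x)).comp x
      ((hasDerivAt_id x).const_mul ((p - 1) / 2))).const_mul 2
    refine this.congr_deriv ?_
    ring
  have h2 := (h1.rpow_const (p := -(2 / (p - 1))) (Or.inl (ne_of_gt (hcosh _)))).const_mul (cp p)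
  have hQ : Q p = fun x => cp p * (2 * Real.cosh ((p - 1) / 2 * x)) ^ (-(2 / (p - 1))) := rfl
  rw [hQ]
  refine h2.congr_deriv ?_
  have : -(2 / (p - 1)) * (p - 1) = -2 := by field_simp
  field_simp

lemma derivQ_sq (p : ℝ) (hp : 5 < p) (u : ℝ) :
    (deriv (Q p) u) ^ 2 = cp p ^ 2 * Real.exp (2 * u) * (1 - Real.exp ((p - 1) * u)) ^ 2 *
      (1 + Real.exp ((p - 1) * u)) ^ (-(2 + 4 / (p - 1))) := by
  have hp1 : (0:ℝ) < p - 1 := by linarith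
  rw [(hasDerivQ p hp u).deriv]
  set a := (p - 1) / 2 * u with ha
  set s := Real.exp a with hs
  have hs0 : 0 < s := Real.exp_pos a
  have hsinh : Real.sinh a = (s - s⁻¹) / 2 := by rw [Real.sinh_eq, ← Real.exp_neg]
  have hcosh : 2 * Real.cosh a = s + s⁻¹ := by rw [Real.cosh_eq, ← Real.exp_neg]; ring
  have hss : 0 < s + s⁻¹ := by positivity
  set r := -(2 / (p - 1)) - 1 with hr
  have hsq : ((s + s⁻¹) ^ r) ^ 2 = (s + s⁻¹) ^ (r * 2) := by
    rw [← Real.rpow_natCast ((s + s⁻¹) ^ r) 2, ← Real.rpow_mul hss.le]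
    norm_num
  have hfact : s + s⁻¹ = s⁻¹ * (1 + s ^ 2) := by field_simp; ring
  have hmul : (s + s⁻¹) ^ (r * 2) = (s⁻¹) ^ (r * 2) * (1 + s ^ 2) ^ (r * 2) := by
    rw [hfact, Real.mul_rpow (by positivity) (by positivity)]
  have hinv : (s⁻¹ : ℝ) ^ (r * 2) = s ^ (-(r * 2)) := by
    rw [Real.inv_rpow hs0.le, ← Real.rpow_neg hs0.le]
  have hs2 : s ^ 2 = Real.exp ((p - 1) * u) := by
    rw [hs, sq, ← Real.exp_add]; congr 1; rw [ha]; ring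
  have hsB : s ^ (-(r * 2)) = Real.exp ((p + 1) * u) := by
    rw [hs, ← Real.exp_mul]; congr 1; rw [ha, hr]; field_simp; ring
  have hE2 : r * 2 = -(2 + 4 / (p - 1)) := by rw [hr]; field_simp; ring
  have hexp : Real.exp ((p + 1) * u) = Real.exp (2 * u) * s ^ 2 := by
    rw [hs2, ← Real.exp_add]; congr 1; ring
  have key : (s - s⁻¹) ^ 2 * Real.exp ((p + 1) * u) = Real.exp (2 * u) * (1 - s ^ 2) ^ 2 := by
    rw [hexp]; field_simp; ring
  calc (-2 * cp p * Real.sinh a * (2 * Real.cosh a) ^ r) ^ 2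
      = cp p ^ 2 * (s - s⁻¹) ^ 2 * ((s + s⁻¹) ^ r) ^ 2 := by rw [hsinh, hcosh]; ring
    _ = cp p ^ 2 * (s - s⁻¹) ^ 2 * (s ^ (-(r * 2)) * (1 + s ^ 2) ^ (r * 2)) := by
        rw [hsq, hmul, hinv]
    _ = cp p ^ 2 * ((s - s⁻¹) ^ 2 * Real.exp ((p + 1) * u)) * (1 + s ^ 2) ^ (r * 2) := by
        rw [hsB]; ring
    _ = cp p ^ 2 * Real.exp (2 * u) * (1 - Real.exp ((p - 1) * u)) ^ 2 *
        (1 + Real.exp ((p - 1) * u)) ^ (-(2 + 4 / (p - 1))) := by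
        rw [key, hs2, hE2]; ring

lemma setIntegral_Iic_comp_sub (f : ℝ → ℝ) (y : ℝ) :
    ∫ x in Iic (0:ℝ), f (x - y) = ∫ u in Iic (-y), f u := by
  rw [← integral_indicator measurableSet_Iic, ← integral_indicator measurableSet_Iic]
  have h : ∀ x : ℝ, (Iic (0:ℝ)).indicator (fun x => f (x - y)) x
      = (Iic (-y)).indicator f (x - y) := by
    intro x
    by_cases hx : x ≤ 0
    · rw [Set.indicator_of_mem (by exact hx : x ∈ Iic (0:ℝ)),
        Set.indicator_of_mem (by simp only [Set.mem_Iic]; linarith : x - y ∈ Iic (-y))]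
    · rw [Set.indicator_of_notMem (by exact hx : x ∉ Iic (0:ℝ)),
        Set.indicator_of_notMem (by simp only [Set.mem_Iic]; push_neg; linarith : x - y ∉ Iic (-y))]
  simp_rw [h]
  exact integral_sub_right_eq_self ((Iic (-y)).indicator f) y

set_option maxHeartbeats 1000000 in
lemma hbound {β t : ℝ} (hβ2 : 2 ≤ β) (hβ3 : β ≤ 3) (ht : 0 < t) (ht6 : t ≤ 1/6) :
    |(1 - t)^2 * (1 + t) ^ (-β) - 1 + (2 + β) * t| ≤ 50 * t^2 := by
  have h1t : (0:ℝ) < 1 + t := by linarith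
  set L := Real.log (1 + t) with hLdef
  have hL0 : 0 ≤ L := Real.log_nonneg (by linarith)
  have hLt : L ≤ t := by
    have := Real.log_le_sub_one_of_pos h1t; linarith
  have hLlow : t - t^2 ≤ L := by
    have h2 := Real.log_le_sub_one_of_pos (inv_pos.mpr h1t)
    rw [Real.log_inv] at h2
    have h4 : (1+t)⁻¹ ≤ 1 - t + t^2 := by
      rw [inv_eq_one_div, div_le_iff₀ h1t]; nlinarith
    linarith
  set P := (1+t) ^ (-β) with hPdef'
  have hPdef : P = Real.exp (-(β * L)) := by
    rw [hPdef', Real.rpow_def_of_pos h1t]; congr 1; ring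
  have hP0 : 0 < P := by rw [hPdef]; exact Real.exp_pos _
  have hPl : 1 - β * t ≤ P := by
    have h5 := Real.add_one_le_exp (-(β * L))
    have h6 : β * L ≤ β * t := mul_le_mul_of_nonneg_left hLt (by linarith)
    rw [hPdef]; linarith
  have hPu : P ≤ 1 - β * t + 12 * t^2 := by
    have he : 1 + β * L ≤ Real.exp (β * L) := by linarith [Real.add_one_le_exp (β*L)]
    have hP' : P = (Real.exp (β * L))⁻¹ := by rw [hPdef, ← Real.exp_neg]
    have hβL : 0 ≤ β * L := mul_nonneg (by linarith) hL0
    have hP2 : P ≤ (1 + β * L)⁻¹ := by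
      rw [hP']
      exact inv_anti₀ (by linarith) he
    have hP3 : (1 + β*L)⁻¹ ≤ 1 - β*L + (β*L)^2 := by
      rw [inv_eq_one_div, div_le_iff₀ (by linarith)]; nlinarith
    have hLsq : L^2 ≤ t^2 := by nlinarith
    have e1 : β*(t - t^2) ≤ β*L := mul_le_mul_of_nonneg_left hLlow (by linarith)
    have e2 : (β*L)^2 ≤ β^2*t^2 := by
      nlinarith [mul_le_mul_of_nonneg_left hLsq (show (0:ℝ) ≤ β^2 by positivity)]
    have e3 : β*t^2 + β^2*t^2 ≤ 12*t^2 := by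
      have := mul_le_mul_of_nonneg_right (show β + β^2 ≤ 12 by nlinarith) (sq_nonneg t)
      nlinarith
    nlinarith
  have ht1 : t ≤ 1 := by linarith
  have htsq : t^3 ≤ t^2 := by nlinarith [mul_pos ht ht]
  have ht4 : t^4 ≤ t^2 := by
    nlinarith [mul_pos ht ht, sq_nonneg t,
      mul_nonneg (sq_nonneg t) (show (0:ℝ) ≤ 1 - t^2 by nlinarith)]
  rw [abs_le]
  constructor
  · have l1 : (1-t)^2 * (1 - β*t) ≤ (1-t)^2 * P := mul_le_mul_of_nonneg_left hPl (sq_nonneg _)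
    have l2 : (1-t)^2*(1-β*t) - 1 + (2+β)*t = (1+2*β)*t^2 - β*t^3 := by ring
    have l3 : β*t^3 ≤ β*t^2 := mul_le_mul_of_nonneg_left htsq (by linarith)
    have l5 : 0 ≤ (1+2*β)*t^2 - β*t^3 := by
      nlinarith [mul_nonneg (show (0:ℝ) ≤ β by linarith) (sq_nonneg t), sq_nonneg t]
    linarith [sq_nonneg t]
  · have u1 : (1-t)^2 * P ≤ (1-t)^2 * (1 - β*t + 12*t^2) := mul_le_mul_of_nonneg_left hPu (sq_nonneg _)
    have u2 : (1-t)^2*(1-β*t+12*t^2) - 1 + (2+β)*t = (13+2*β)*t^2 - (24+β)*t^3 + 12*t^4 := by ring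
    have u4 : 0 ≤ (24+β)*t^3 := by positivity
    have u5 : (13+2*β)*t^2 ≤ 19*t^2 := mul_le_mul_of_nonneg_right (by linarith) (sq_nonneg t)
    linarith

theorem stmt9 (p : ℝ) (hp : 5 < p) :
    (fun y : ℝ => (∫ x in Set.Iic (0 : ℝ), (deriv (Q p) (x - y)) ^ 2)
        - cp p ^ 2 / 2 * Real.exp (-2 * y)
        + 2 * p * cp p ^ 2 / (((p - 1) / 2) * (p + 1)) * Real.exp (-(p + 1) * y))
      =o[atTop] (fun y : ℝ => Real.exp (-(p + 1) * y)) := by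
  have hp1 : (0:ℝ) < p - 1 := by linarith
  have hp2 : (0:ℝ) < p + 1 := by linarith
  have h2p : (0:ℝ) < 2 * p := by linarith
  set β : ℝ := 2 + 4 / (p - 1) with hβdef
  have hβ2 : 2 ≤ β := by
    have h : 0 < 4 / (p - 1) := by positivity
    rw [hβdef]; linarith
  have hβ3 : β ≤ 3 := by
    have h : 4 / (p - 1) ≤ 1 := by rw [div_le_one hp1]; linarith
    rw [hβdef]; linarith
  set c2 : ℝ := cp p ^ 2 with hc2def
  have hc2 : 0 < c2 := by
    rw [hc2def, cp]
    positivity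
  set G : ℝ → ℝ := fun u => c2 * Real.exp (2 * u) * (1 - Real.exp ((p - 1) * u)) ^ 2 *
      (1 + Real.exp ((p - 1) * u)) ^ (-β) with hGdef
  have hGcont : Continuous G := by
    apply Continuous.mul
    · apply Continuous.mul
      · exact continuous_const.mul (Real.continuous_exp.comp (continuous_const.mul continuous_id))
      · exact ((continuous_const.sub
          (Real.continuous_exp.comp (continuous_const.mul continuous_id))).pow 2)
    · apply Continuous.rpow_const
      · exact continuous_const.add (Real.continuous_exp.comp (continuous_const.mul continuous_id))
      · intro x
        left
        positivity
  have hGint : ∀ a : ℝ, IntegrableOn G (Iic a) := by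
    intro a
    set T := Real.exp ((p - 1) * a) with hT
    refine Integrable.mono' (((integrableOn_exp_mul_Iic two_pos a).const_mul
      (c2 * (1 + T) ^ 2))) hGcont.aestronglyMeasurable.restrict ?_
    filter_upwards [ae_restrict_mem measurableSet_Iic] with u hu
    have hu' : u ≤ a := hu
    have ht0 : 0 < Real.exp ((p - 1) * u) := Real.exp_pos _
    have htT : Real.exp ((p - 1) * u) ≤ T := by
      rw [hT]
      exact Real.exp_le_exp.2 (mul_le_mul_of_nonneg_left hu' hp1.le)
    have hr1 : (1 + Real.exp ((p - 1) * u)) ^ (-β) ≤ 1 :=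
      Real.rpow_le_one_of_one_le_of_nonpos (by linarith) (by linarith)
    have hr0 : 0 ≤ (1 + Real.exp ((p - 1) * u)) ^ (-β) :=
      Real.rpow_nonneg (by linarith) _
    have hsq : (1 - Real.exp ((p - 1) * u)) ^ 2 ≤ (1 + T) ^ 2 := by nlinarith
    have hG0 : 0 ≤ G u := by
      rw [hGdef]
      positivity
    rw [Real.norm_eq_abs, abs_of_nonneg hG0, hGdef]
    simp only
    have key : (1 - Real.exp ((p - 1) * u)) ^ 2 * (1 + Real.exp ((p - 1) * u)) ^ (-β)
        ≤ (1 + T) ^ 2 := by nlinarith [sq_nonneg (1 - Real.exp ((p - 1) * u))]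
    have e0 : 0 ≤ c2 * Real.exp (2 * u) := by positivity
    calc c2 * Real.exp (2 * u) * (1 - Real.exp ((p - 1) * u)) ^ 2 *
          (1 + Real.exp ((p - 1) * u)) ^ (-β)
        = c2 * Real.exp (2 * u) * ((1 - Real.exp ((p - 1) * u)) ^ 2 *
          (1 + Real.exp ((p - 1) * u)) ^ (-β)) := by ring
      _ ≤ c2 * Real.exp (2 * u) * (1 + T) ^ 2 := mul_le_mul_of_nonneg_left key e0
      _ = c2 * (1 + T) ^ 2 * Real.exp (2 * u) := by ring
  set R : ℝ → ℝ := fun u => G u - c2 * Real.exp (2 * u) + c2 * (2 + β) * Real.exp ((p + 1) * u)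
    with hRdef
  have hRint : ∀ a : ℝ, IntegrableOn R (Iic a) := by
    intro a
    exact ((hGint a).sub ((integrableOn_exp_mul_Iic two_pos a).const_mul c2)).add
      ((integrableOn_exp_mul_Iic hp2 a).const_mul (c2 * (2 + β)))
  have key : ∀ y : ℝ, (∫ x in Iic (0:ℝ), (deriv (Q p) (x - y)) ^ 2)
      = c2 / 2 * Real.exp (-2 * y) - c2 * (2 + β) / (p + 1) * Real.exp (-(p + 1) * y)
        + ∫ u in Iic (-y), R u := by
    intro y
    have h1 : (∫ x in Iic (0:ℝ), (deriv (Q p) (x - y)) ^ 2) = ∫ u in Iic (-y), G u := by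
      have : ∀ x : ℝ, (deriv (Q p) (x - y)) ^ 2 = G (x - y) := by
        intro x
        rw [derivQ_sq p hp (x - y), hGdef]
      simp_rw [this]
      exact setIntegral_Iic_comp_sub G y
    set f1 : ℝ → ℝ := fun u => c2 * Real.exp (2 * u) with hf1def
    set f2 : ℝ → ℝ := fun u => c2 * (2 + β) * Real.exp ((p + 1) * u) with hf2def
    have hf1 : IntegrableOn f1 (Iic (-y)) := (integrableOn_exp_mul_Iic two_pos (-y)).const_mul c2
    have hf2 : IntegrableOn f2 (Iic (-y)) :=
      (integrableOn_exp_mul_Iic hp2 (-y)).const_mul (c2 * (2 + β))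
    have hGeq : ∀ u, G u = R u + f1 u - f2 u := by
      intro u
      rw [hRdef, hf1def, hf2def]
      simp only
      ring
    have h2 : ∫ u in Iic (-y), G u = (∫ u in Iic (-y), R u)
        + (c2 * ∫ u in Iic (-y), Real.exp (2 * u))
        - (c2 * (2 + β)) * ∫ u in Iic (-y), Real.exp ((p + 1) * u) := by
      simp_rw [hGeq]
      have hadd : IntegrableOn (fun u => R u + f1 u) (Iic (-y)) := by exact (hRint (-y)).add hf1
      rw [integral_sub hadd hf2, integral_add (hRint (-y)) hf1,
        hf1def, hf2def]
      simp only
      rw [integral_const_mul, integral_const_mul]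
    rw [h1, h2, integral_exp_mul_Iic two_pos, integral_exp_mul_Iic hp2]
    rw [show (2 : ℝ) * (-y) = -2 * y by ring, show (p + 1) * (-y) = -(p + 1) * y by ring]
    ring
  have hconst : c2 * (2 + β) / (p + 1) = 2 * p * c2 / ((p - 1) / 2 * (p + 1)) := by
    rw [hβdef]
    field_simp
    ring
  have hTeq : (fun y : ℝ => (∫ x in Set.Iic (0 : ℝ), (deriv (Q p) (x - y)) ^ 2)
        - cp p ^ 2 / 2 * Real.exp (-2 * y)
        + 2 * p * cp p ^ 2 / (((p - 1) / 2) * (p + 1)) * Real.exp (-(p + 1) * y))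
      = fun y : ℝ => ∫ u in Iic (-y), R u := by
    funext y
    rw [key y, ← hc2def, ← hconst]
    ring
  rw [hTeq]
  -- the remainder bound
  set u₀ : ℝ := Real.log (1/6) / (p - 1) with hu₀
  have hRb : ∀ u : ℝ, u ≤ u₀ → ‖R u‖ ≤ 50 * c2 * Real.exp ((2 * p) * u) := by
    intro u hu
    set t := Real.exp ((p - 1) * u) with htdef
    have ht : 0 < t := Real.exp_pos _
    have ht6 : t ≤ 1/6 := by
      rw [htdef]
      calc Real.exp ((p - 1) * u) ≤ Real.exp ((p - 1) * u₀) :=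
            Real.exp_le_exp.2 (mul_le_mul_of_nonneg_left hu hp1.le)
        _ = 1/6 := by
            rw [hu₀, mul_div_cancel₀ _ (ne_of_gt hp1)]
            rw [Real.exp_log (by norm_num)]
    have hexp1 : Real.exp ((p + 1) * u) = Real.exp (2 * u) * t := by
      rw [htdef, ← Real.exp_add]; congr 1; ring
    have hR : R u = c2 * Real.exp (2 * u) * ((1 - t)^2 * (1 + t) ^ (-β) - 1 + (2 + β) * t) := by
      rw [hRdef, hGdef]
      simp only
      rw [hexp1, ← htdef]
      ring
    have hexp2 : Real.exp (2 * u) * t ^ 2 = Real.exp ((2 * p) * u) := by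
      rw [htdef, sq, ← Real.exp_add, ← Real.exp_add]; congr 1; ring
    rw [hR, Real.norm_eq_abs, abs_mul, abs_of_pos (by positivity : 0 < c2 * Real.exp (2 * u))]
    calc c2 * Real.exp (2 * u) * |(1 - t)^2 * (1 + t) ^ (-β) - 1 + (2 + β) * t|
        ≤ c2 * Real.exp (2 * u) * (50 * t ^ 2) :=
          mul_le_mul_of_nonneg_left (hbound hβ2 hβ3 ht ht6) (by positivity)
      _ = 50 * c2 * (Real.exp (2 * u) * t ^ 2) := by ring
      _ = 50 * c2 * Real.exp ((2 * p) * u) := by rw [hexp2]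
  have hbig : (fun y : ℝ => ∫ u in Iic (-y), R u) =O[atTop]
      fun y : ℝ => Real.exp ((-(2 * p)) * y) := by
    rw [isBigO_iff]
    refine ⟨50 * c2 / (2 * p), ?_⟩
    filter_upwards [eventually_ge_atTop (-u₀)] with y hy
    have h1 : ‖∫ u in Iic (-y), R u‖ ≤ ∫ u in Iic (-y), ‖R u‖ :=
      norm_integral_le_integral_norm _
    have h2 : (∫ u in Iic (-y), ‖R u‖) ≤ ∫ u in Iic (-y), 50 * c2 * Real.exp ((2 * p) * u) := by
      refine setIntegral_mono_on ((hRint (-y)).norm)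
        ((integrableOn_exp_mul_Iic h2p (-y)).const_mul (50 * c2)) measurableSet_Iic ?_
      intro u hu
      exact hRb u (le_trans hu (by linarith))
    have h3 : (∫ u in Iic (-y), 50 * c2 * Real.exp ((2 * p) * u))
        = 50 * c2 * (Real.exp ((2 * p) * (-y)) / (2 * p)) := by
      rw [integral_const_mul, integral_exp_mul_Iic h2p]
    have hnorm : ‖Real.exp ((-(2 * p)) * y)‖ = Real.exp ((2 * p) * (-y)) := by
      rw [Real.norm_eq_abs, abs_of_pos (Real.exp_pos _)]
      congr 1
      ring
    rw [hnorm]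
    calc ‖∫ u in Iic (-y), R u‖ ≤ 50 * c2 * (Real.exp ((2 * p) * (-y)) / (2 * p)) := by
          rw [← h3]; exact le_trans h1 h2
      _ = 50 * c2 / (2 * p) * Real.exp ((2 * p) * (-y)) := by ring
  have hlittle : (fun y : ℝ => Real.exp ((-(2 * p)) * y)) =o[atTop]
      fun y : ℝ => Real.exp (-(p + 1) * y) := by
    apply isLittleO_of_tendsto (fun x hx => absurd hx (Real.exp_ne_zero _))
    have heq : ∀ y : ℝ, Real.exp ((-(2 * p)) * y) / Real.exp (-(p + 1) * y)
        = Real.exp (-((p - 1) * y)) := by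
      intro y
      rw [← Real.exp_sub]
      congr 1
      ring
    simp_rw [heq]
    have h1 : Tendsto (fun y : ℝ => (p - 1) * y) atTop atTop :=
      Tendsto.const_mul_atTop hp1 tendsto_id
    exact Real.tendsto_exp_neg_atTop_nhds_zero.comp h1
  exact hbig.trans_isLittleO hlittle

end
end

section
/- Let p > 5, c_p := (2(p+1))^{1/(p−1)}, and α := (p−1)/2. Then, as y → +∞, ∫_{−∞}^0 Q(x−y)² dx = (c_p²/2) e^{−2y} − (2 c_p²/(α(p+1))) e^{−(p+1)y} + o(e^{−(p+1)y}); that is, the function y ↦ ∫_{−∞}^0 Q(x−y)² dx − (c_p²/2) e^{−2y} + (2 c_p²/(α(p+1))) e^{−(p+1)y} is o(e^{−(p+1)y}) as y → +∞. -/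
open MeasureTheory Real Filter Asymptotics

noncomputable section

lemma myExpInt {a : ℝ} (ha : 0 < a) (s : ℝ) :
    IntegrableOn (fun u : ℝ => Real.exp (a * u)) (Set.Iic s) := by
  have h1 : IntegrableOn (fun x : ℝ => Real.exp (-a * x)) (Set.Ici (-s)) := by
    rw [integrableOn_Ici_iff_integrableOn_Ioi]
    exact exp_neg_integrableOn_Ioi _ ha
  have h2 : Integrable ((Set.Ici (-s)).indicator fun x : ℝ => Real.exp (-a * x)) :=
    (integrable_indicator_iff measurableSet_Ici).2 h1
  have h3 := h2.comp_neg
  have h4 : (fun x : ℝ => ((Set.Ici (-s)).indicator fun x : ℝ => Real.exp (-a * x)) (-x))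
      = (Set.Iic s).indicator fun u : ℝ => Real.exp (a * u) := by
    funext x
    by_cases hx : x ≤ s
    · rw [Set.indicator_of_mem (by simpa using hx), Set.indicator_of_mem (by simpa using hx)]
      ring_nf
    · rw [Set.indicator_of_notMem (by simpa using hx),
        Set.indicator_of_notMem (by simpa using hx)]
  rw [h4] at h3
  exact (integrable_indicator_iff measurableSet_Iic).1 h3

lemma myExpIntegral {a : ℝ} (ha : 0 < a) (s : ℝ) :
    ∫ u in Set.Iic s, Real.exp (a * u) = Real.exp (a * s) / a := by
  have hd : ∀ x ∈ Set.Iic s, HasDerivAt (fun u : ℝ => Real.exp (a * u) / a)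
      (Real.exp (a * x)) x := by
    intro x _
    have h := ((Real.hasDerivAt_exp (a * x)).comp x ((hasDerivAt_id x).const_mul a)).div_const a
    refine h.congr_deriv ?_
    field_simp
  have htend : Tendsto (fun u : ℝ => Real.exp (a * u) / a) atBot (nhds 0) := by
    have h1 : Tendsto (fun u : ℝ => a * u) atBot atBot := tendsto_id.const_mul_atBot ha
    have := (Real.tendsto_exp_atBot.comp h1).div_const a
    simpa using this
  have := integral_Iic_of_hasDerivAt_of_tendsto' hd (myExpInt ha s) htend
  rw [this]
  ring

lemma bernoulli_lower {b t : ℝ} (hb0 : 0 < b) (hb1 : b ≤ 1) (ht : 0 ≤ t) :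
    1 - b * t ≤ (1 + t) ^ (-b) := by
  have h1t : (0:ℝ) < 1 + t := by linarith
  have hA : (0:ℝ) < (1 + t) ^ (-b) := Real.rpow_pos_of_pos h1t _
  have hC : (1 + t) ^ b ≤ 1 + b * t :=
    rpow_one_add_le_one_add_mul_self (by linarith) hb0.le hb1
  have hAC : (1 + t) ^ (-b) * (1 + t) ^ b = 1 := by
    rw [← Real.rpow_add h1t]; simp
  have hbt : 0 ≤ b * t := mul_nonneg hb0.le ht
  nlinarith [mul_le_mul_of_nonneg_left hC hA.le, sq_nonneg (b * t)]

lemma bernoulli_upper {b t : ℝ} (hb0 : 0 < b) (hb1 : b ≤ 1) (ht : 0 ≤ t) :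
    (1 + t) ^ (-b) ≤ 1 - b * t + b * t ^ 2 := by
  have h1t : (0:ℝ) < 1 + t := by linarith
  have hA : (0:ℝ) < (1 + t) ^ (-b) := Real.rpow_pos_of_pos h1t _
  have hB : (1 + t) ^ (1 - b) ≤ 1 + (1 - b) * t :=
    rpow_one_add_le_one_add_mul_self (by linarith) (by linarith) (by linarith)
  have hAB : (1 + t) ^ (-b) * (1 + t) = (1 + t) ^ (1 - b) := by
    nth_rewrite 2 [← Real.rpow_one (1 + t)]
    rw [← Real.rpow_add h1t]
    congr 1
    ring
  have hbt3 : 0 ≤ b * (t * (t * t)) := by positivity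
  nlinarith

lemma Qsq (p : ℝ) (hp : 5 < p) (u : ℝ) :
    Q p u ^ 2 = cp p ^ 2 * Real.exp (2 * u) *
      (1 + Real.exp ((p - 1) * u)) ^ (-(4 / (p - 1))) := by
  have hp1 : (0:ℝ) < p - 1 := by linarith
  have hc : (0:ℝ) < 2 * Real.cosh ((p - 1) / 2 * u) := by positivity
  have hT : (0:ℝ) < 1 + Real.exp ((p - 1) * u) := by positivity
  have hbase : 2 * Real.cosh ((p - 1) / 2 * u)
      = Real.exp (-((p - 1) / 2 * u)) * (1 + Real.exp ((p - 1) * u)) := by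
    have h2 : Real.exp ((p - 1) * u)
        = Real.exp ((p - 1) / 2 * u) * Real.exp ((p - 1) / 2 * u) := by
      rw [← Real.exp_add]; ring_nf
    rw [Real.cosh_eq, h2, Real.exp_neg]
    field_simp
    ring
  have hsq : Q p u ^ 2 = cp p ^ 2 *
      (2 * Real.cosh ((p - 1) / 2 * u)) ^ (-(4 / (p - 1))) := by
    rw [Q, cp.eq_def, mul_pow]
    congr 1
    rw [← Real.rpow_natCast ((2 * Real.cosh ((p - 1) / 2 * u)) ^ (-(2 / (p - 1)))) 2,
      ← Real.rpow_mul hc.le]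
    congr 1
    push_cast
    ring
  rw [hsq, hbase, Real.mul_rpow (Real.exp_pos _).le hT.le, ← Real.exp_mul]
  rw [show -((p - 1) / 2 * u) * -(4 / (p - 1)) = 2 * u by field_simp; ring]
  ring

theorem stmt10 (p : ℝ) (hp : 5 < p) :
    (fun y : ℝ => (∫ x in Set.Iic (0 : ℝ), (Q p (x - y)) ^ 2)
        - cp p ^ 2 / 2 * Real.exp (-2 * y)
        + 2 * cp p ^ 2 / (((p - 1) / 2) * (p + 1)) * Real.exp (-(p + 1) * y))
      =o[atTop] (fun y : ℝ => Real.exp (-(p + 1) * y)) := by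
  have hp1 : (0:ℝ) < p - 1 := by linarith
  have hpp1 : (0:ℝ) < p + 1 := by linarith
  have hcp : (0:ℝ) < cp p := Real.rpow_pos_of_pos (by linarith) _
  set c2 : ℝ := cp p ^ 2 with hc2def
  have hc2 : 0 < c2 := by positivity
  set b : ℝ := 4 / (p - 1) with hbdef
  have hb0 : 0 < b := by positivity
  have hb1 : b ≤ 1 := by rw [hbdef, div_le_one hp1]; linarith
  set g : ℝ → ℝ := fun u => Q p u ^ 2 - c2 * Real.exp (2 * u)
      + b * c2 * Real.exp ((p + 1) * u) with hgdef
  -- pointwise bounds for g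
  have hg_bounds : ∀ u : ℝ, 0 ≤ g u ∧ g u ≤ b * c2 * Real.exp (2 * p * u) := by
    intro u
    have hT : (0:ℝ) ≤ Real.exp ((p - 1) * u) := (Real.exp_pos _).le
    have hlow := bernoulli_lower hb0 hb1 hT
    have hupp := bernoulli_upper hb0 hb1 hT
    have hq := Qsq p hp u
    have hE1 : Real.exp ((p + 1) * u) = Real.exp (2 * u) * Real.exp ((p - 1) * u) := by
      rw [← Real.exp_add]; ring_nf
    have hE2 : Real.exp (2 * p * u)
        = Real.exp (2 * u) * Real.exp ((p - 1) * u) ^ 2 := by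
      rw [sq, ← Real.exp_add, ← Real.exp_add]; ring_nf
    have hexp2 : (0:ℝ) < Real.exp (2 * u) := Real.exp_pos _
    constructor
    · rw [hgdef]
      simp only
      rw [hq, hE1]
      nlinarith [mul_le_mul_of_nonneg_left hlow (mul_pos hc2 hexp2).le]
    · rw [hgdef]
      simp only
      rw [hq, hE1, hE2]
      nlinarith [mul_le_mul_of_nonneg_left hupp (mul_pos hc2 hexp2).le]
  -- continuity / measurability of Q^2
  have hQcont : Continuous fun u : ℝ => Q p u ^ 2 := by
    apply Continuous.pow
    apply Continuous.mul continuous_const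
    apply Continuous.rpow_const
    · exact continuous_const.mul (Real.continuous_cosh.comp (continuous_const.mul continuous_id))
    · intro x
      left
      positivity
  have hgcont : Continuous g := by
    rw [hgdef]
    fun_prop
  -- integrabilities on Iic s
  have hIQ : ∀ s : ℝ, IntegrableOn (fun u : ℝ => Q p u ^ 2) (Set.Iic s) := by
    intro s
    apply Integrable.mono' ((myExpInt two_pos s).const_mul c2)
      hQcont.aestronglyMeasurable
    filter_upwards with u
    rw [Real.norm_of_nonneg (sq_nonneg _), Qsq p hp u]
    have hT : (0:ℝ) < 1 + Real.exp ((p - 1) * u) := by positivity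
    have h1 : (1 + Real.exp ((p - 1) * u)) ^ (-b) ≤ 1 := by
      apply Real.rpow_le_one_of_one_le_of_nonpos
      · nlinarith [Real.exp_pos ((p - 1) * u)]
      · linarith
    have : (0:ℝ) < c2 * Real.exp (2 * u) := by positivity
    calc c2 * Real.exp (2 * u) * (1 + Real.exp ((p - 1) * u)) ^ (-(4 / (p - 1)))
        ≤ c2 * Real.exp (2 * u) * 1 := by
          apply mul_le_mul_of_nonneg_left _ this.le
          exact h1
      _ = c2 * Real.exp (2 * u) := by ring
  have hIe2 : ∀ s : ℝ, IntegrableOn (fun u : ℝ => c2 * Real.exp (2 * u)) (Set.Iic s) :=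
    fun s => (myExpInt two_pos s).const_mul c2
  have hIep1 : ∀ s : ℝ, IntegrableOn (fun u : ℝ => b * c2 * Real.exp ((p + 1) * u)) (Set.Iic s) :=
    fun s => (myExpInt hpp1 s).const_mul (b * c2)
  have hIg : ∀ s : ℝ, IntegrableOn g (Set.Iic s) := by
    intro s
    exact ((hIQ s).sub (hIe2 s)).add (hIep1 s)
  have hIbound : ∀ s : ℝ, IntegrableOn (fun u : ℝ => b * c2 * Real.exp (2 * p * u)) (Set.Iic s) :=
    fun s => (myExpInt (by linarith) s).const_mul (b * c2)
  -- Step A: translation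
  have hstepA : ∀ y : ℝ, (∫ x in Set.Iic (0:ℝ), Q p (x - y) ^ 2)
      = ∫ u in Set.Iic (-y), Q p u ^ 2 := by
    intro y
    rw [← integral_indicator measurableSet_Iic, ← integral_indicator measurableSet_Iic]
    rw [← integral_sub_right_eq_self
      ((Set.Iic (-y)).indicator fun u : ℝ => Q p u ^ 2) y]
    congr 1
    funext x
    by_cases hx : x ≤ 0
    · rw [Set.indicator_of_mem (by simp; linarith), Set.indicator_of_mem (by simpa using hx)]
    · rw [Set.indicator_of_notMem (by simp; linarith),
        Set.indicator_of_notMem (by simpa using hx)]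
  -- key identity
  have key : ∀ y : ℝ, (∫ x in Set.Iic (0:ℝ), Q p (x - y) ^ 2)
      - c2 / 2 * Real.exp (-2 * y)
      + 2 * c2 / (((p - 1) / 2) * (p + 1)) * Real.exp (-(p + 1) * y)
      = ∫ u in Set.Iic (-y), g u := by
    intro y
    rw [hstepA y]
    have e1 : IntegrableOn (fun u : ℝ => Q p u ^ 2 - c2 * Real.exp (2 * u)) (Set.Iic (-y)) :=
      (hIQ _).sub (hIe2 _)
    have h1 : ∫ u in Set.Iic (-y), (Q p u ^ 2 - c2 * Real.exp (2 * u))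
        = (∫ u in Set.Iic (-y), Q p u ^ 2) - ∫ u in Set.Iic (-y), c2 * Real.exp (2 * u) :=
      integral_sub (hIQ _) (hIe2 _)
    have h2 : ∫ u in Set.Iic (-y), g u
        = (∫ u in Set.Iic (-y), (Q p u ^ 2 - c2 * Real.exp (2 * u)))
          + ∫ u in Set.Iic (-y), b * c2 * Real.exp ((p + 1) * u) :=
      integral_add e1 (hIep1 _)
    have hv2 : ∫ u in Set.Iic (-y), c2 * Real.exp (2 * u) = c2 * (Real.exp (2 * (-y)) / 2) := by
      rw [integral_const_mul, myExpIntegral two_pos]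
    have hvp : ∫ u in Set.Iic (-y), b * c2 * Real.exp ((p + 1) * u)
        = b * c2 * (Real.exp ((p + 1) * (-y)) / (p + 1)) := by
      rw [integral_const_mul, myExpIntegral hpp1]
    rw [h2, h1, hv2, hvp]
    rw [show (2:ℝ) * (-y) = -2 * y by ring, show (p + 1) * (-y) = -(p + 1) * y by ring]
    rw [hbdef]
    field_simp
    ring
  -- bound on ∫ g
  have hbd : ∀ y : ℝ, ‖∫ u in Set.Iic (-y), g u‖
      ≤ b * c2 / (2 * p) * Real.exp (2 * p * (-y)) := by
    intro y
    rw [Real.norm_of_nonneg (setIntegral_nonneg measurableSet_Iic fun u _ => (hg_bounds u).1)]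
    calc ∫ u in Set.Iic (-y), g u
        ≤ ∫ u in Set.Iic (-y), b * c2 * Real.exp (2 * p * u) :=
          setIntegral_mono_on (hIg _) (hIbound _) measurableSet_Iic
            fun u _ => (hg_bounds u).2
      _ = b * c2 / (2 * p) * Real.exp (2 * p * (-y)) := by
          rw [integral_const_mul, myExpIntegral (by linarith : (0:ℝ) < 2 * p)]
          ring
  -- conclude
  have hO : (fun y : ℝ => (∫ x in Set.Iic (0:ℝ), Q p (x - y) ^ 2)
      - c2 / 2 * Real.exp (-2 * y)
      + 2 * c2 / (((p - 1) / 2) * (p + 1)) * Real.exp (-(p + 1) * y))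
      =O[atTop] fun y : ℝ => Real.exp (2 * p * (-y)) := by
    apply IsBigO.of_bound (b * c2 / (2 * p))
    filter_upwards with y
    rw [key y, Real.norm_of_nonneg (Real.exp_pos _).le]
    exact hbd y
  have ho : (fun y : ℝ => Real.exp (2 * p * (-y)))
      =o[atTop] fun y : ℝ => Real.exp (-(p + 1) * y) := by
    rw [Real.isLittleO_exp_comp_exp_comp]
    have : (fun y : ℝ => -(p + 1) * y - 2 * p * (-y)) = fun y : ℝ => (p - 1) * y := by
      funext y; ring
    rw [this]
    exact (tendsto_id.const_mul_atTop hp1)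
  exact hO.trans_isLittleO ho

end
end

section
/- Let p > 5, γ < 0, c_p := (2(p+1))^{1/(p−1)}, and α := (p−1)/2. Then, as y → +∞, (1/(2|γ|)) ( |γ| Q(−y) − 2 Q′(−y) )² = ((|γ|−2)²/(2|γ|)) c_p² e^{−2y} + ((|γ|−2)(2p−|γ|)/(|γ|α)) c_p² e^{−(p+1)y} + o(e^{−(p+1)y}); that is, the difference of the two sides (with the o-term removed) is o(e^{−(p+1)y}) as y → +∞. -/
open MeasureTheory Real Filter Asymptotics

noncomputable section

theorem stmt11 (p γ : ℝ) (hp : 5 < p) (hγ : γ < 0) :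
    (fun y : ℝ =>
        (1 / (2 * |γ|)) * (|γ| * Q p (-y) - 2 * deriv (Q p) (-y)) ^ 2
        - ((|γ| - 2) ^ 2 / (2 * |γ|)) * cp p ^ 2 * Real.exp (-2 * y)
        - ((|γ| - 2) * (2 * p - |γ|) / (|γ| * ((p - 1) / 2))) * cp p ^ 2
            * Real.exp (-(p + 1) * y))
      =o[atTop] (fun y : ℝ => Real.exp (-(p + 1) * y)) := by
  have hp1 : (0:ℝ) < p - 1 := by linarith
  have hγ0 : (0:ℝ) < |γ| := abs_pos.mpr (ne_of_lt hγ)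
  set c : ℝ := cp p with hc
  set e : ℝ := -(2 / (p - 1)) with he
  have hae : (p - 1) / 2 * e = -1 := by
    rw [he]; field_simp
  set F : ℝ → ℝ :=
    fun u => 1 / (2 * |γ|) * (c * ((1 + u) ^ (e - 1) * ((|γ| - 2) + (|γ| + 2) * u))) ^ 2 with hF
  set B : ℝ := (|γ| - 2) * (2 * p - |γ|) / (|γ| * ((p - 1) / 2)) * c ^ 2 with hB
  have hQdef : ∀ x : ℝ, Q p x = c * (2 * Real.cosh ((p - 1) / 2 * x)) ^ e := by
    intro x; simp [Q, hc, cp, he]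
  -- derivative of Q
  have hQ' : ∀ x : ℝ, HasDerivAt (Q p)
      (c * ((2 * (Real.sinh ((p - 1) / 2 * x) * ((p - 1) / 2))) * e
        * (2 * Real.cosh ((p - 1) / 2 * x)) ^ (e - 1))) x := by
    intro x
    have h1 : HasDerivAt (fun x : ℝ => (p - 1) / 2 * x) ((p - 1) / 2) x := by
      simpa using (hasDerivAt_id x).const_mul ((p - 1) / 2)
    have h2 : HasDerivAt (fun x : ℝ => 2 * Real.cosh ((p - 1) / 2 * x))
        (2 * (Real.sinh ((p - 1) / 2 * x) * ((p - 1) / 2))) x := by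
      simpa [mul_comm] using (h1.cosh).const_mul 2
    have h3 := h2.rpow_const (p := e) (Or.inl (by positivity))
    have h4 := h3.const_mul c
    have hfe : Q p = fun x : ℝ => c * (2 * Real.cosh ((p - 1) / 2 * x)) ^ e := by
      funext z; exact hQdef z
    rw [hfe]
    exact h4
  -- key identity
  have key : ∀ y : ℝ, (1 / (2 * |γ|)) * (|γ| * Q p (-y) - 2 * deriv (Q p) (-y)) ^ 2
      = F (Real.exp (-(p - 1) * y)) * Real.exp (-2 * y) := by
    intro y
    have hd := (hQ' (-y)).deriv
    set a : ℝ := (p - 1) / 2 * y with ha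
    set u : ℝ := Real.exp (-(p - 1) * y) with hu
    have hu0 : (0:ℝ) < u := Real.exp_pos _
    have hw0 : (0:ℝ) < 1 + u := by linarith
    have hA0 : (0:ℝ) < Real.exp a := Real.exp_pos _
    have hneg : (p - 1) / 2 * (-y) = -a := by rw [ha]; ring
    have hEu : Real.exp a * u = Real.exp (-a) := by
      rw [hu, ← Real.exp_add]; congr 1; rw [ha]; ring
    have hexp_rpow : ∀ b : ℝ, Real.exp a ^ b = Real.exp (a * b) := fun b => by
      rw [Real.rpow_def_of_pos hA0, Real.log_exp]
    have hae' : a * e = -y := by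
      have h : a * e = ((p - 1) / 2 * e) * y := by rw [ha]; ring
      rw [h, hae]; ring
    have hcosh : 2 * Real.cosh ((p - 1) / 2 * (-y)) = Real.exp a * (1 + u) := by
      rw [hneg, Real.cosh_neg, Real.cosh_eq, mul_add, mul_one, hEu]; ring
    have hsinh : 2 * Real.sinh ((p - 1) / 2 * (-y)) = -(Real.exp a * (1 - u)) := by
      rw [hneg, Real.sinh_neg, Real.sinh_eq, mul_sub, mul_one, hEu]; ring
    have hQy : Q p (-y) = c * (Real.exp (-y) * (1 + u) ^ e) := by
      rw [hQdef, hcosh, Real.mul_rpow hA0.le hw0.le, hexp_rpow, hae']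
    have h5 : 2 * (Real.sinh ((p - 1) / 2 * (-y)) * ((p - 1) / 2))
        = -(Real.exp a * (1 - u)) * ((p - 1) / 2) := by
      rw [show (2:ℝ) * (Real.sinh ((p - 1) / 2 * (-y)) * ((p - 1) / 2))
          = 2 * Real.sinh ((p - 1) / 2 * (-y)) * ((p - 1) / 2) from by ring, hsinh]
    have h6 : (2 * Real.cosh ((p - 1) / 2 * (-y))) ^ (e - 1)
        = Real.exp (a * (e - 1)) * (1 + u) ^ (e - 1) := by
      rw [hcosh, Real.mul_rpow hA0.le hw0.le, hexp_rpow]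
    have h7 : Real.exp a * Real.exp (a * (e - 1)) = Real.exp (-y) := by
      rw [← Real.exp_add, ← hae']; congr 1; ring
    have hQD : deriv (Q p) (-y) = c * (Real.exp (-y) * ((1 + u) ^ (e - 1) * (1 - u))) := by
      rw [hd, h5, h6]
      linear_combination
        (c * (-(Real.exp a * (1 - u))) * Real.exp (a * (e - 1)) * (1 + u) ^ (e - 1)) * hae
        + (c * (1 - u) * (1 + u) ^ (e - 1)) * h7
    have h8 : (1 + u) ^ e = (1 + u) ^ (e - 1) * (1 + u) := by
      rw [← Real.rpow_add_one (ne_of_gt hw0) (e - 1), sub_add_cancel]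
    have h9 : Real.exp (-2 * y) = Real.exp (-y) ^ 2 := by
      rw [sq, ← Real.exp_add]; congr 1; ring
    rw [hQy, hQD, h8, hF, h9]
    ring
  have hF0 : F 0 = (|γ| - 2) ^ 2 / (2 * |γ|) * c ^ 2 := by
    simp only [hF]
    rw [show (1:ℝ) + 0 = 1 by ring, Real.one_rpow]
    ring
  -- derivative of F at 0
  have hFd : HasDerivAt F B 0 := by
    have h1 : HasDerivAt (fun u : ℝ => 1 + u) 1 0 := by
      simpa using (hasDerivAt_id (0:ℝ)).const_add 1
    have h2 := h1.rpow_const (p := e - 1) (Or.inl (by norm_num))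
    have h3 : HasDerivAt (fun u : ℝ => (|γ| - 2) + (|γ| + 2) * u) (|γ| + 2) 0 := by
      simpa using ((hasDerivAt_id (0:ℝ)).const_mul (|γ| + 2)).const_add (|γ| - 2)
    have h4 := h2.mul h3
    have h5 := h4.const_mul c
    have h6 := h5.pow 2
    have h7 := h6.const_mul (1 / (2 * |γ|))
    refine h7.congr_deriv ?_
    rw [hB, he]
    norm_num [Real.one_rpow]
    field_simp
    ring
  have hlo : (fun u => F u - F 0 - u * B) =o[nhds 0] fun u : ℝ => u := by
    have h := hasDerivAt_iff_isLittleO.mp hFd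
    simpa using h
  have htend : Tendsto (fun y : ℝ => Real.exp (-(p - 1) * y)) atTop (nhds 0) := by
    rw [Real.tendsto_exp_comp_nhds_zero]
    exact (tendsto_const_mul_atBot_of_neg (by linarith : -(p - 1) < 0)).mpr tendsto_id
  have hcomp := hlo.comp_tendsto htend
  have hmul := hcomp.mul_isBigO (isBigO_refl (fun y : ℝ => Real.exp (-2 * y)) atTop)
  refine hmul.congr' (Eventually.of_forall fun y => ?_) (Eventually.of_forall fun y => ?_)
  · show (F (Real.exp (-(p - 1) * y)) - F 0 - Real.exp (-(p - 1) * y) * B) * Real.exp (-2 * y)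
        = 1 / (2 * |γ|) * (|γ| * Q p (-y) - 2 * deriv (Q p) (-y)) ^ 2
          - (|γ| - 2) ^ 2 / (2 * |γ|) * c ^ 2 * Real.exp (-2 * y)
          - B * Real.exp (-(p + 1) * y)
    rw [key y, hF0]
    rw [show Real.exp (-(p + 1) * y) = Real.exp (-(p - 1) * y) * Real.exp (-2 * y) from by
      rw [← Real.exp_add]; congr 1; ring]
    ring
  · show Real.exp (-(p - 1) * y) * Real.exp (-2 * y) = Real.exp (-(p + 1) * y)
    rw [← Real.exp_add]; congr 1; ring
end
end

section
/- Let p > 5, γ < 0, and s_c := 1/2 − 2/(p−1). Suppose f is an even admissible function satisfying E_γ(f) · M(f)^{(1−s_c)/s_c} ≤ 2^{1/s_c} · E(Q) · M(Q)^{(1−s_c)/s_c} and M(f) ≥ 2 M(Q_{γ²/4}), where M(g) := ∫_ℝ|g|² and Q_ω(x) := ω^{1/(p−1)} Q(√ω x). Then there exists ω ∈ (0, γ²/4] such that M(f) = 2 M(Q_ω) and E_γ(f) ≤ 2 E(Q_ω), where E(Q_ω) := (1/2)∫_ℝ(Q_ω′)² − (1/(p+1))∫_ℝ Q_ω^{p+1}.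 -/
open MeasureTheory Real Filter

noncomputable section

/-- Rescaled ground state `Q_ω`. -/
def Qom (p ω : ℝ) (x : ℝ) : ℝ := ω ^ (1 / (p - 1)) * Q p (Real.sqrt ω * x)

/-- The scaling critical regularity index. -/
def sc (p : ℝ) : ℝ := 1 / 2 - 2 / (p - 1)

lemma Q_pos {p : ℝ} (hp : 1 < p) (x : ℝ) : 0 < Q p x := by
  have h1 : (0:ℝ) < 2 * (p + 1) := by linarith
  have h2 : (0:ℝ) < 2 * Real.cosh ((p - 1) / 2 * x) := by positivity
  exact mul_pos (Real.rpow_pos_of_pos h1 _) (Real.rpow_pos_of_pos h2 _)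

lemma Q_diff (p : ℝ) (x : ℝ) : DifferentiableAt ℝ (Q p) x := by
  have hg : DifferentiableAt ℝ (fun x : ℝ => 2 * Real.cosh ((p - 1) / 2 * x)) x := by
    fun_prop
  have hne : 2 * Real.cosh ((p - 1) / 2 * x) ≠ 0 := by positivity
  exact (hg.rpow_const (Or.inl hne)).const_mul _

lemma Q_cont (p : ℝ) : Continuous (Q p) :=
  continuous_iff_continuousAt.2 fun x => (Q_diff p x).continuousAt

lemma Q_sq_integrable {p : ℝ} (hp : 1 < p) : Integrable (fun x => (Q p x) ^ 2) := by
  have hpm : p - 1 ≠ 0 := by intro h; linarith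
  set C : ℝ := (2 * (p + 1)) ^ (1 / (p - 1)) with hCdef
  have hC : 0 < C := Real.rpow_pos_of_pos (by linarith) _
  have hbd : ∀ x : ℝ, (Q p x) ^ 2 ≤ C ^ 2 * (1 + x ^ 2)⁻¹ := by
    intro x
    have hb : (0:ℝ) ≤ (p - 1) / 2 := by linarith
    have hch : Real.exp (|(p - 1) / 2 * x|) ≤ 2 * Real.cosh ((p - 1) / 2 * x) := by
      rw [Real.cosh_eq]
      rcases abs_cases ((p - 1) / 2 * x) with ⟨h, _⟩ | ⟨h, _⟩ <;> rw [h] <;>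
        nlinarith [Real.exp_pos ((p - 1) / 2 * x), Real.exp_pos (-((p - 1) / 2 * x))]
    have hcpos : (0:ℝ) < 2 * Real.cosh ((p - 1) / 2 * x) := by positivity
    have key : ((2 * Real.cosh ((p - 1) / 2 * x)) ^ (-(2 / (p - 1)))) ^ 2
        ≤ Real.exp (-(2 * |x|)) := by
      have h1 : ((2 * Real.cosh ((p - 1) / 2 * x)) ^ (-(2 / (p - 1)))) ^ 2
          = (2 * Real.cosh ((p - 1) / 2 * x)) ^ (-(2 / (p - 1)) * 2) := by
        rw [← Real.rpow_natCast ((2 * Real.cosh ((p - 1) / 2 * x)) ^ (-(2 / (p - 1)))) 2,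
          ← Real.rpow_mul hcpos.le]
        norm_num
      rw [h1]
      have h2 : (2 * Real.cosh ((p - 1) / 2 * x)) ^ (-(2 / (p - 1)) * 2)
          ≤ (Real.exp (|(p - 1) / 2 * x|)) ^ (-(2 / (p - 1)) * 2) := by
        apply Real.rpow_le_rpow_of_nonpos (Real.exp_pos _) hch
        have : (0:ℝ) < 2 / (p - 1) := div_pos two_pos (by linarith)
        linarith
      refine h2.trans_eq ?_
      rw [← Real.exp_mul]
      congr 1
      rw [abs_mul, abs_of_nonneg hb]
      field_simp
    have hexp : Real.exp (-(2 * |x|)) ≤ (1 + x ^ 2)⁻¹ := by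
      rw [Real.exp_neg]
      have h3 : 1 + x ^ 2 ≤ Real.exp (2 * |x|) := by
        have h4 := Real.add_one_le_exp |x|
        have h5 : Real.exp (2 * |x|) = Real.exp |x| * Real.exp |x| := by
          rw [← Real.exp_add]; ring_nf
        nlinarith [abs_nonneg x, sq_abs x, Real.exp_pos |x|]
      exact inv_anti₀ (by positivity) h3
    calc (Q p x) ^ 2 = C ^ 2 * ((2 * Real.cosh ((p - 1) / 2 * x)) ^ (-(2 / (p - 1)))) ^ 2 := by
          rw [Q]; ring
      _ ≤ C ^ 2 * Real.exp (-(2 * |x|)) := by nlinarith [sq_nonneg C]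
      _ ≤ C ^ 2 * (1 + x ^ 2)⁻¹ := by nlinarith [sq_nonneg C]
  have hg : Integrable (fun x : ℝ => C ^ 2 * (1 + x ^ 2)⁻¹) :=
    integrable_inv_one_add_sq.const_mul _
  refine hg.mono' (((Q_cont p).pow 2).aestronglyMeasurable) ?_
  filter_upwards with x
  rw [Real.norm_eq_abs, abs_of_nonneg (sq_nonneg _)]
  exact hbd x

lemma MQ_pos {p : ℝ} (hp : 1 < p) : 0 < ∫ x, (Q p x) ^ 2 := by
  rw [integral_pos_iff_support_of_nonneg (fun x => sq_nonneg _) (Q_sq_integrable hp)]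
  have h : Function.support (fun x => (Q p x) ^ 2) = Set.univ :=
    Set.eq_univ_of_forall fun x => (pow_pos (Q_pos hp x) 2).ne'
  simp [h]

lemma Qom_deriv {p ω : ℝ} (hω : 0 < ω) (x : ℝ) :
    deriv (Qom p ω) x
      = ω ^ (1 / (p - 1)) * (deriv (Q p) (Real.sqrt ω * x) * Real.sqrt ω) := by
  have h1 : HasDerivAt (fun x : ℝ => Real.sqrt ω * x) (Real.sqrt ω) x := by
    simpa using (hasDerivAt_id x).const_mul (Real.sqrt ω)
  have h2 : HasDerivAt (Q p) (deriv (Q p) (Real.sqrt ω * x)) (Real.sqrt ω * x) :=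
    (Q_diff p _).hasDerivAt
  have h3 := (h2.comp x h1).const_mul (ω ^ (1 / (p - 1)))
  exact h3.deriv

lemma sqrt_inv_rpow {ω : ℝ} (hω : 0 < ω) : |(Real.sqrt ω)⁻¹| = ω ^ (-(1/2) : ℝ) := by
  rw [abs_of_nonneg (inv_nonneg.2 (Real.sqrt_nonneg ω)), Real.sqrt_eq_rpow,
    ← Real.rpow_neg hω.le]

lemma Mom_eq {p ω : ℝ} (hp : 1 < p) (hω : 0 < ω) :
    ∫ x, (Qom p ω x) ^ 2 = ω ^ (-(sc p)) * ∫ x, (Q p x) ^ 2 := by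
  have hpm : p - 1 ≠ 0 := by intro h; linarith
  calc ∫ x, (Qom p ω x) ^ 2
      = ∫ x, (ω ^ (1 / (p - 1))) ^ 2 * ((fun y => (Q p y) ^ 2) (Real.sqrt ω * x)) := by
        simp only [Qom, mul_pow]
    _ = (ω ^ (1 / (p - 1))) ^ 2 * ∫ x, (fun y => (Q p y) ^ 2) (Real.sqrt ω * x) :=
        integral_const_mul _ _
    _ = (ω ^ (1 / (p - 1))) ^ 2 * (|(Real.sqrt ω)⁻¹| • ∫ y, (Q p y) ^ 2) := by
        rw [Measure.integral_comp_mul_left (fun y => (Q p y) ^ 2) (Real.sqrt ω)]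
    _ = ω ^ (-(sc p)) * ∫ x, (Q p x) ^ 2 := by
        have hc : (ω ^ (1 / (p - 1))) ^ 2 * ω ^ (-(1/2) : ℝ) = ω ^ (-(sc p)) := by
          rw [← Real.rpow_natCast (ω ^ (1 / (p - 1))) 2, ← Real.rpow_mul hω.le,
            ← Real.rpow_add hω]
          congr 1
          rw [sc]
          push_cast
          field_simp
          ring
        rw [sqrt_inv_rpow hω, smul_eq_mul, ← mul_assoc, hc]

lemma Lpom_eq {p ω : ℝ} (hp : 1 < p) (hω : 0 < ω) :
    ∫ x, (Qom p ω x) ^ (p + 1) = ω ^ (1 - sc p) * ∫ x, (Q p x) ^ (p + 1) := by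
  have hpm : p - 1 ≠ 0 := by intro h; linarith
  calc ∫ x, (Qom p ω x) ^ (p + 1)
      = ∫ x, (ω ^ (1 / (p - 1))) ^ (p + 1) * ((fun y => (Q p y) ^ (p + 1)) (Real.sqrt ω * x)) := by
        refine integral_congr_ae (Eventually.of_forall fun x => ?_)
        simp only [Qom]
        rw [Real.mul_rpow (Real.rpow_nonneg hω.le _) (Q_pos hp _).le]
    _ = (ω ^ (1 / (p - 1))) ^ (p + 1) * ∫ x, (fun y => (Q p y) ^ (p + 1)) (Real.sqrt ω * x) :=
        integral_const_mul _ _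
    _ = (ω ^ (1 / (p - 1))) ^ (p + 1) * (|(Real.sqrt ω)⁻¹| • ∫ y, (Q p y) ^ (p + 1)) := by
        rw [Measure.integral_comp_mul_left (fun y => (Q p y) ^ (p + 1)) (Real.sqrt ω)]
    _ = ω ^ (1 - sc p) * ∫ x, (Q p x) ^ (p + 1) := by
        have hc : (ω ^ (1 / (p - 1))) ^ (p + 1) * ω ^ (-(1/2) : ℝ) = ω ^ (1 - sc p) := by
          rw [← Real.rpow_mul hω.le, ← Real.rpow_add hω]
          congr 1
          rw [sc]
          field_simp
          ring
        rw [sqrt_inv_rpow hω, smul_eq_mul, ← mul_assoc, hc]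

lemma Dom_eq {p ω : ℝ} (hp : 1 < p) (hω : 0 < ω) :
    ∫ x, (deriv (Qom p ω) x) ^ 2 = ω ^ (1 - sc p) * ∫ x, (deriv (Q p) x) ^ 2 := by
  have hpm : p - 1 ≠ 0 := by intro h; linarith
  have hsq : (Real.sqrt ω) ^ 2 = ω := Real.sq_sqrt hω.le
  calc ∫ x, (deriv (Qom p ω) x) ^ 2
      = ∫ x, ((ω ^ (1 / (p - 1))) ^ 2 * ω) * ((fun y => (deriv (Q p) y) ^ 2) (Real.sqrt ω * x)) := by
        refine integral_congr_ae (Eventually.of_forall fun x => ?_)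
        simp only [Qom_deriv hω, mul_pow, hsq]
        ring
    _ = ((ω ^ (1 / (p - 1))) ^ 2 * ω) * ∫ x, (fun y => (deriv (Q p) y) ^ 2) (Real.sqrt ω * x) :=
        integral_const_mul _ _
    _ = ((ω ^ (1 / (p - 1))) ^ 2 * ω) * (|(Real.sqrt ω)⁻¹| • ∫ y, (deriv (Q p) y) ^ 2) := by
        rw [Measure.integral_comp_mul_left (fun y => (deriv (Q p) y) ^ 2) (Real.sqrt ω)]
    _ = ω ^ (1 - sc p) * ∫ x, (deriv (Q p) x) ^ 2 := by
        have hc : (ω ^ (1 / (p - 1))) ^ 2 * ω * ω ^ (-(1/2) : ℝ) = ω ^ (1 - sc p) := by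
          rw [← Real.rpow_natCast (ω ^ (1 / (p - 1))) 2, ← Real.rpow_mul hω.le,
            ← Real.rpow_add_one hω.ne', ← Real.rpow_add hω]
          congr 1
          rw [sc]
          push_cast
          field_simp
          ring
        rw [sqrt_inv_rpow hω, smul_eq_mul, ← mul_assoc, hc]

/-- Admissible function: C¹ with `f, f' ∈ L²` and `f ∈ L^{p+1}`. -/
structure Admissible (p : ℝ) (f : ℝ → ℂ) : Prop where
  smooth : ContDiff ℝ 1 f
  memL2 : Integrable (fun x => ‖f x‖ ^ 2)
  memL2' : Integrable (fun x => ‖deriv f x‖ ^ 2)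
  memLp : Integrable (fun x => ‖f x‖ ^ (p + 1))

/-- The energy `E_γ`. -/
def Efun (p γ : ℝ) (f : ℝ → ℂ) : ℝ :=
  (1 / 2) * (∫ x, ‖deriv f x‖ ^ 2) + (|γ| / 2) * ‖f 0‖ ^ 2
    - (1 / (p + 1)) * (∫ x, ‖f x‖ ^ (p + 1))

/-- The energy of the real ground state `Q`. -/
def EQ (p : ℝ) : ℝ :=
  (1 / 2) * (∫ x, (deriv (Q p) x) ^ 2) - (1 / (p + 1)) * (∫ x, (Q p x) ^ (p + 1))

/-- The energy of `Q_ω` (with `γ = 0`). -/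
def EQom (p ω : ℝ) : ℝ :=
  (1 / 2) * (∫ x, (deriv (Qom p ω) x) ^ 2)
    - (1 / (p + 1)) * (∫ x, (Qom p ω x) ^ (p + 1))

lemma EQom_eq {p ω : ℝ} (hp : 1 < p) (hω : 0 < ω) :
    EQom p ω = ω ^ (1 - sc p) * EQ p := by
  rw [EQom, EQ, Dom_eq hp hω, Lpom_eq hp hω]
  ring

theorem stmt19 (p γ : ℝ) (hp : 5 < p) (hγ : γ < 0) (f : ℝ → ℂ)
    (hf : Admissible p f) (he : ∀ x, f (-x) = f x)
    (hME : Efun p γ f * (∫ x, ‖f x‖ ^ 2) ^ ((1 - sc p) / sc p) ≤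
      (2 : ℝ) ^ (1 / sc p) * EQ p * (∫ x, (Q p x) ^ 2) ^ ((1 - sc p) / sc p))
    (hM : 2 * (∫ x, (Qom p (γ ^ 2 / 4) x) ^ 2) ≤ ∫ x, ‖f x‖ ^ 2) :
    ∃ ω : ℝ, 0 < ω ∧ ω ≤ γ ^ 2 / 4 ∧
      (∫ x, ‖f x‖ ^ 2) = 2 * (∫ x, (Qom p ω x) ^ 2) ∧
      Efun p γ f ≤ 2 * EQom p ω := by
  have hp1 : (1:ℝ) < p := by linarith
  have hs : 0 < sc p := by
    have h1 : 2 / (p - 1) < 1 / 2 := by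
      rw [div_lt_div_iff₀ (by linarith) (by norm_num)]
      linarith
    rw [sc]; linarith
  set Mf : ℝ := ∫ x, ‖f x‖ ^ 2 with hMfdef
  set MQ : ℝ := ∫ x, (Q p x) ^ 2 with hMQdef
  have hMQ : 0 < MQ := MQ_pos hp1
  have hγ0 : γ ≠ 0 := hγ.ne
  have hω₀ : (0:ℝ) < γ ^ 2 / 4 := by positivity
  rw [Mom_eq hp1 hω₀] at hM
  have hMf : 0 < Mf := by
    have : 0 < (γ ^ 2 / 4) ^ (-(sc p)) * MQ :=
      mul_pos (Real.rpow_pos_of_pos hω₀ _) hMQ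
    linarith
  set r : ℝ := Mf / (2 * MQ) with hrdef
  have hr : 0 < r := div_pos hMf (by linarith)
  set ω : ℝ := r ^ (-(1 / sc p)) with hωdef
  have hω : 0 < ω := Real.rpow_pos_of_pos hr _
  have key : ω ^ (-(sc p)) = r := by
    rw [hωdef, ← Real.rpow_mul hr.le,
      show -(1 / sc p) * -(sc p) = 1 by field_simp, Real.rpow_one]
  have hMfeq : Mf = 2 * (ω ^ (-(sc p)) * MQ) := by
    rw [key, hrdef]
    field_simp
  have hωle : ω ≤ γ ^ 2 / 4 := by
    have h1 : (γ ^ 2 / 4) ^ (-(sc p)) ≤ r := by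
      rw [hrdef, le_div_iff₀ (by linarith)]
      linarith
    have h2 : ω ≤ ((γ ^ 2 / 4) ^ (-(sc p))) ^ (-(1 / sc p)) := by
      rw [hωdef]
      exact Real.rpow_le_rpow_of_nonpos (Real.rpow_pos_of_pos hω₀ _) h1
        (by rw [neg_nonpos]; positivity)
    refine h2.trans_eq ?_
    rw [← Real.rpow_mul hω₀.le]
    have : -(sc p) * -(1 / sc p) = 1 := by field_simp
    rw [this, Real.rpow_one]
  refine ⟨ω, hω, hωle, ?_, ?_⟩
  · rw [Mom_eq hp1 hω]
    exact hMfeq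
  · rw [EQom_eq hp1 hω]
    set α : ℝ := (1 - sc p) / sc p with hαdef
    have hMfα : (0:ℝ) < Mf ^ α := Real.rpow_pos_of_pos hMf _
    rw [← mul_le_mul_iff_of_pos_right hMfα]
    refine hME.trans (le_of_eq ?_)
    have e1 : Mf ^ α = 2 ^ α * ((ω ^ (1 - sc p))⁻¹ * MQ ^ α) := by
      rw [hMfeq, Real.mul_rpow (by norm_num)
          (mul_nonneg (Real.rpow_nonneg hω.le _) hMQ.le),
        Real.mul_rpow (Real.rpow_nonneg hω.le _) hMQ.le]
      have hexp : -(sc p) * α = -(1 - sc p) := by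
        rw [hαdef]; field_simp
      rw [← Real.rpow_mul hω.le, hexp, Real.rpow_neg hω.le]
    have e2 : (2:ℝ) ^ (1 / sc p) = 2 * 2 ^ α := by
      have h3 : 1 / sc p = 1 + α := by rw [hαdef]; field_simp; ring
      rw [h3, Real.rpow_add two_pos, Real.rpow_one]
    have e3 : ω ^ (1 - sc p) * (ω ^ (1 - sc p))⁻¹ = 1 :=
      mul_inv_cancel₀ (Real.rpow_pos_of_pos hω _).ne'
    rw [e1, e2]
    clear_value α ω r MQ Mf
    have hwne : ω ^ (1 - sc p) ≠ 0 := (Real.rpow_pos_of_pos hω _).ne'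
    field_simp

end
end
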